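/- For the theory A with clauses (¬bird ∨ ab ∨ fly) and bird over symbols P = {ab}, Q = {bird, fly}, the exclusion constraint Σ_{p∈∅} X_p ≤ −1 generated by Nerode et al.'s algorithm after finding the model {bird, fly} is unsatisfiable over 0-1 assignments, yet {bird, ab} is a minimal model of A w.r.t. P with Q fixed; hence the algorithm of Nerode et al. is incomplete for circumscription with fixed propositions. -/
import Mathlib


inductive PSym : Type
  | bird | ab | fly
deriving DecidableEq

open PSym

/-- The theory with clauses `¬bird ∨ ab ∨ fly` and `bird`. -/
def TheoryA (I : Set PSym) : Prop :=
  (bird ∉ I ∨ ab ∈ I ∨ fly ∈ I) ∧ bird ∈ I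

/-- `I₁ <^{P} I₂` with `P = {ab}` minimized and `Q = {bird, fly}` fixed. -/
def ltPQ (P Q : Set PSym) (I₁ I₂ : Set PSym) : Prop :=
  (I₁ ∩ Q = I₂ ∩ Q ∧ I₁ ∩ P ⊆ I₂ ∩ P) ∧ ¬ (I₂ ∩ Q = I₁ ∩ Q ∧ I₂ ∩ P ⊆ I₁ ∩ P)

def IsMinModel (A : Set PSym → Prop) (P Q : Set PSym) (M : Set PSym) : Prop :=
  A M ∧ ¬ ∃ M', A M' ∧ ltPQ P Q M' M

theorem stmt19 :
    -- the exclusion constraint `∑_{p ∈ ∅} X_p ≤ -1` generated by Nerode et al.'s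
    -- algorithm after finding `{bird, fly}` has no 0-1 solution ...
    (∀ I : Finset PSym,
      ¬ (∑ p ∈ (∅ : Finset PSym), (if p ∈ I then (1 : ℤ) else 0)) ≤ -1) ∧
    -- ... yet `{bird, ab}` is a minimal model of `A` w.r.t. `{ab}` with
    -- `{bird, fly}` fixed, so the algorithm misses it
    IsMinModel TheoryA {ab} {bird, fly} {bird, ab} := by
  constructor
  · intro I h
    simp at h
  · constructor
    · exact ⟨Or.inr (Or.inl (by simp)), by simp⟩
    · rintro ⟨M', ⟨hcl, hb⟩, ⟨hQ, hP⟩, hne⟩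
      apply hne
      constructor
      · exact hQ.symm
      · intro x hx
        simp only [Set.mem_inter_iff, Set.mem_singleton_iff] at hx ⊢
        obtain ⟨_, rfl⟩ := hx
        refine ⟨?_, rfl⟩
        -- need ab ∈ M'
        rcases hcl with h | h | h
        · exact absurd hb h
        · exact h
        · -- fly ∈ M' contradicts M' ∩ Q = {bird,ab} ∩ Q
          exfalso
          have : fly ∈ M' ∩ {bird, fly} := ⟨h, by simp⟩
          rw [hQ] at this
          simp [Set.mem_inter_iff] at this
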